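/- arXiv:1708.09542 — 4 statements merged into one kernel-verified Lean document; each statement's English description precedes it below -/
import Mathlib

section
/- Let L > 0, α ∈ ℝ, r > 0, let m : [0,L] → ℝ be continuous, let K ∈ L^∞((0,L)×(0,L)), and let u ∈ C²([0,L]) satisfy u(x) > 0 on [0,L], u'(0) = u'(L) = 0 and (e^{αx}u'(x))' + r e^{αx} u(x)(m(x) − ∫₀ᴸ K(x,y) e^{αy} u(y) dy) = 0 on (0,L). Suppose μ ∈ ℂ with Re μ ≥ 0, τ ≥ 0, and ψ ∈ C²([0,L],ℂ) is not identically zero, with ψ'(0) = ψ'(L) = 0, and satisfies (e^{αx}ψ'(x))' + r e^{αx}(m(x) − ∫₀ᴸ K(x,y) e^{αy} u(y) dy)ψ(x) − r e^{αx} u(x) (∫₀ᴸ K(x,y) e^{αy} ψ(y) dy) e^{−μτ} = μ e^{αx} ψ(x) for all x ∈ (0,L). Then 0 ≤ Re(μ)/r ≤ e^{2|α|L} L ‖u‖_∞ ‖K‖_{L^∞} and |Im(μ)|/r ≤ e^{2|α|L} L ‖u‖_∞ ‖K‖_{L^∞}; in particular |μ/r| is bounded by √2 · e^{2|α|L} L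 ‖u‖_∞ ‖K‖_{L^∞}. -/
open MeasureTheory

/-- The characteristic (eigenvalue) equation `Δ(r,μ,τ)ψ = 0` of the linearization at a
steady state `u`, in pointwise form on `(0,L)`. -/
def CharEq (L α r : ℝ) (m : ℝ → ℝ) (K : ℝ → ℝ → ℝ) (u : ℝ → ℝ)
    (μ : ℂ) (τ : ℝ) (ψ : ℝ → ℂ) : Prop :=
  ∀ x ∈ Set.Ioo 0 L,
    derivWithin (fun t => (Real.exp (α * t) : ℂ) * derivWithin ψ (Set.Icc 0 L) t)
        (Set.Icc 0 L) x
      + (r : ℂ) * (Real.exp (α * x) : ℂ) *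
          ((m x : ℂ) - Complex.ofReal (∫ y in (0:ℝ)..L, K x y * Real.exp (α * y) * u y)) * ψ x
      - (r : ℂ) * (Real.exp (α * x) : ℂ) * (u x : ℂ) *
          (∫ y in (0:ℝ)..L, (Complex.ofReal (K x y * Real.exp (α * y))) * ψ y) *
          Complex.exp (-μ * (τ : ℂ))
      = μ * (Real.exp (α * x) : ℂ) * ψ x

open Set Topology ComplexConjugate

/-!
Picone's identity: for `W = e^{αx} (ψ' ψ̄ - u' |ψ|² / u)` one has
`W' = (e^{αx} ψ')' ψ̄ - (e^{αx} u')' |ψ|² / u + e^{αx} |u ψ' - u' ψ|² / u²`.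
`W` vanishes at both ends by the Neumann conditions, so integrating over `[0, L]` and using the
equations for `u` and `ψ` (the local terms `m - ∫ K u` cancel) gives
`μ ∫ e^{αx} |ψ|² + ∫ e^{αx} |u ψ' - u' ψ|² / u² = -r e^{-μτ} ∫ e^{αx} u ψ̄ ∫ K e^{αy} ψ`.
The second term on the left is nonnegative and `|e^{-μτ}| ≤ 1`, while the right side is at most
`r ‖K‖ ‖u‖ (∫ e^{αx} |ψ|)² ≤ r ‖K‖ ‖u‖ L e^{|α|L} ∫ e^{αx} |ψ|²` by Cauchy–Schwarz.
Comparing real and imaginary parts gives the bounds.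
-/

theorem DifferentiableOn.hasDerivAt_derivWithin {𝕜 F : Type*} [NontriviallyNormedField 𝕜]
    [NormedAddCommGroup F] [NormedSpace 𝕜 F] {f : 𝕜 → F} {s : Set 𝕜} {x : 𝕜}
    (h : DifferentiableOn 𝕜 f s) (hs : s ∈ 𝓝 x) : HasDerivAt f (derivWithin f s x) x :=
  (h x (mem_of_mem_nhds hs)).hasDerivWithinAt.hasDerivAt hs

theorem ae_ae_norm_le_toReal_eLpNorm_top {α β E : Type*} [MeasurableSpace α] [MeasurableSpace β]
    [NormedAddCommGroup E] {μ : Measure α} {ν : Measure β} [SFinite ν] {f : α × β → E}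
    (hf : MemLp f ⊤ (μ.prod ν)) :
    ∀ᵐ x ∂μ, ∀ᵐ y ∂ν, ‖f (x, y)‖ ≤ (eLpNorm f ⊤ (μ.prod ν)).toReal := by
  rw [toReal_eLpNorm hf.aestronglyMeasurable]
  exact Measure.ae_ae_of_ae_prod (ae_le_lpNorm_exponent_top hf)

theorem ae_ae_abs_le_toReal_eLpNorm_top_Ioo {a b : ℝ} {K : ℝ → ℝ → ℝ}
    (hK : MemLp (fun p : ℝ × ℝ => K p.1 p.2) ⊤ (volume.restrict (Ioo a b ×ˢ Ioo a b))) :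
    ∀ᵐ x ∂volume.restrict (Ioc a b), ∀ᵐ y ∂volume.restrict (Ioc a b),
      |K x y| ≤ (eLpNorm (fun p : ℝ × ℝ => K p.1 p.2) ⊤
        (volume.restrict (Ioo a b ×ˢ Ioo a b))).toReal := by
  rw [Measure.volume_eq_prod, ← Measure.prod_restrict] at hK ⊢
  rw [← Measure.restrict_congr_set (Ioo_ae_eq_Ioc (μ := volume))]
  exact ae_ae_norm_le_toReal_eLpNorm_top hK

theorem sq_integral_mul_le {X : Type*} [MeasurableSpace X] {μ : Measure X} {w f : X → ℝ}
    (hw : 0 ≤ᵐ[μ] w) (hwi : Integrable w μ) (hwf : Integrable (fun x => w x * f x) μ)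
    (hwf2 : Integrable (fun x => w x * f x ^ 2) μ) :
    (∫ x, w x * f x ∂μ) ^ 2 ≤ (∫ x, w x ∂μ) * ∫ x, w x * f x ^ 2 ∂μ := by
  have hquad : ∀ t : ℝ, 0 ≤ (∫ x, w x * f x ^ 2 ∂μ) * (t * t) + 2 * (∫ x, w x * f x ∂μ) * t
      + ∫ x, w x ∂μ := by
    intro t
    have hexpand : ∫ x, w x * (t * f x + 1) ^ 2 ∂μ
        = (∫ x, w x * f x ^ 2 ∂μ) * (t * t) + (∫ x, w x * f x ∂μ) * (2 * t) + ∫ x, w x ∂μ := by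
      have hint : Integrable (fun x => w x * f x ^ 2 * (t * t) + w x * f x * (2 * t)) μ :=
        (hwf2.mul_const _).add (hwf.mul_const _)
      rw [← integral_mul_const, ← integral_mul_const,
        ← integral_add (hwf2.mul_const _) (hwf.mul_const _), ← integral_add hint hwi]
      congr 1 with x
      ring
    have := integral_nonneg_of_ae (hw.mono fun x hx => mul_nonneg hx (sq_nonneg (t * f x + 1)))
    linarith
  have := discrim_le_zero hquad
  rw [discrim] at this
  linarith

theorem integral_exp_mul_le {α L : ℝ} (hL : 0 ≤ L) :
    ∫ x in (0 : ℝ)..L, Real.exp (α * x) ≤ L * Real.exp (|α| * L) := by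
  have hle : ∀ x ∈ Icc 0 L, Real.exp (α * x) ≤ Real.exp (|α| * L) := fun x hx =>
    Real.exp_le_exp.mpr <| (le_abs_self _).trans <| by
      rw [abs_mul, abs_of_nonneg hx.1]; exact mul_le_mul_of_nonneg_left hx.2 (abs_nonneg α)
  calc ∫ x in (0 : ℝ)..L, Real.exp (α * x) ≤ ∫ _ in (0 : ℝ)..L, Real.exp (|α| * L) :=
        intervalIntegral.integral_mono_on hL (Continuous.intervalIntegrable (by fun_prop) _ _)
          intervalIntegrable_const hle
    _ = L * Real.exp (|α| * L) := by simp

theorem sq_integral_exp_mul_norm_le {α L : ℝ} {ψ : ℝ → ℂ} (hL : 0 ≤ L)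
    (hψ : ContinuousOn ψ (Icc 0 L)) :
    (∫ x in (0 : ℝ)..L, Real.exp (α * x) * ‖ψ x‖) ^ 2
      ≤ L * Real.exp (2 * |α| * L) * ∫ x in (0 : ℝ)..L, Real.exp (α * x) * ‖ψ x‖ ^ 2 := by
  have hint : ∀ {f : ℝ → ℝ}, ContinuousOn f (Icc 0 L) → Integrable f (volume.restrict (Ioc 0 L)) :=
    fun hf => (hf.intervalIntegrable_of_Icc hL).1
  have hcs := sq_integral_mul_le (μ := volume.restrict (Ioc 0 L))
    (w := fun x => Real.exp (α * x)) (f := fun x => ‖ψ x‖)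
    (ae_of_all _ fun x => (Real.exp_pos _).le) (hint (by fun_prop)) (hint (by fun_prop))
    (hint (by fun_prop))
  simp only [← intervalIntegral.integral_of_le hL] at hcs
  refine hcs.trans (mul_le_mul_of_nonneg_right ((integral_exp_mul_le hL).trans ?_)
    (intervalIntegral.integral_nonneg hL fun x _ => by positivity))
  gcongr
  nlinarith [abs_nonneg α]

theorem integral_exp_mul_norm_sq_pos {α L : ℝ} {ψ : ℝ → ℂ} (hL : 0 < L)
    (hψ : ContinuousOn ψ (Icc 0 L)) (hψne : ∃ x ∈ Icc 0 L, ψ x ≠ 0) :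
    0 < ∫ x in (0 : ℝ)..L, Real.exp (α * x) * ‖ψ x‖ ^ 2 := by
  obtain ⟨x₀, hx₀, hψx₀⟩ := hψne
  exact intervalIntegral.integral_pos hL (by fun_prop) (fun x _ => by positivity)
    ⟨x₀, hx₀, by positivity⟩

theorem IsCompact.le_sSup_image_abs {X : Type*} [TopologicalSpace X] {s : Set X} {f : X → ℝ}
    (hs : IsCompact s) (hf : ContinuousOn f s) {x : X} (hx : x ∈ s) :
    f x ≤ sSup ((fun x => |f x|) '' s) :=
  (le_abs_self _).trans (le_csSup (hs.bddAbove_image hf.abs) ⟨x, hx, rfl⟩)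

theorem hasDerivAt_picone {p u du : ℝ → ℝ} {ψ dψ : ℝ → ℂ} {x Du : ℝ} {Dψ : ℂ}
    (hψ : HasDerivAt ψ (dψ x) x) (hu : HasDerivAt u (du x) x)
    (hpψ : HasDerivAt (fun t => (p t : ℂ) * dψ t) Dψ x)
    (hpu : HasDerivAt (fun t => p t * du t) Du x) (hux : u x ≠ 0) :
    HasDerivAt
      (fun t => (p t : ℂ) * dψ t * conj (ψ t) - (p t * du t : ℝ) * (ψ t * conj (ψ t)) / u t)
      (Dψ * conj (ψ x) - Du * (ψ x * conj (ψ x)) / u x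
        + ((p x * ‖u x * dψ x - du x * ψ x‖ ^ 2 / u x ^ 2 : ℝ) : ℂ)) x := by
  have hux' : (u x : ℂ) ≠ 0 := by exact_mod_cast hux
  refine ((hpψ.mul hψ.star).sub
    ((hpu.ofReal_comp.mul (hψ.mul hψ.star)).div hu.ofReal_comp hux')).congr_deriv ?_
  simp only [Complex.star_def, Pi.mul_apply]
  push_cast
  rw [← Complex.mul_conj']
  field_simp
  simp only [map_sub, map_mul, Complex.conj_ofReal]
  ring

section Picone

noncomputable def piconeForm (p u : ℝ → ℝ) (ψ : ℝ → ℂ) (s : Set ℝ) (x : ℝ) : ℂ :=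
  derivWithin (fun t => (p t : ℂ) * derivWithin ψ s t) s x * conj (ψ x)
    - (derivWithin (fun t => p t * derivWithin u s t) s x : ℝ) * (ψ x * conj (ψ x)) / u x

noncomputable def piconeRemainder (p u : ℝ → ℝ) (ψ : ℝ → ℂ) (s : Set ℝ) (x : ℝ) : ℝ :=
  p x * ‖u x * derivWithin ψ s x - derivWithin u s x * ψ x‖ ^ 2 / u x ^ 2

variable {a b : ℝ} {p u : ℝ → ℝ} {ψ : ℝ → ℂ}

theorem piconeRemainder_nonneg {s : Set ℝ} {x : ℝ} (hp : 0 ≤ p x) :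
    0 ≤ piconeRemainder p u ψ s x := by
  unfold piconeRemainder
  positivity

variable (hab : a < b) (hp : ContDiffOn ℝ 1 p (Icc a b)) (hu : ContDiffOn ℝ 2 u (Icc a b))
  (hψ : ContDiffOn ℝ 2 ψ (Icc a b)) (hu_ne : ∀ x ∈ Icc a b, u x ≠ 0)
include hab hp hu hψ hu_ne

theorem continuousOn_piconeForm : ContinuousOn (piconeForm p u ψ (Icc a b)) (Icc a b) := by
  have hs : UniqueDiffOn ℝ (Icc a b) := uniqueDiffOn_Icc hab
  have hpψ' := ((Complex.ofRealCLM.contDiff.comp_contDiffOn hp).mul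
    (hψ.derivWithin hs (m := 1) (by norm_num))).continuousOn_derivWithin hs le_rfl
  have hpu' := (hp.mul (hu.derivWithin hs (m := 1) (by norm_num))).continuousOn_derivWithin hs
    le_rfl
  have hψc := hψ.continuousOn
  have huC := Complex.continuous_ofReal.comp_continuousOn hu.continuousOn
  have hpu'C := Complex.continuous_ofReal.comp_continuousOn hpu'
  have hu_neC : ∀ x ∈ Icc a b, (u x : ℂ) ≠ 0 := fun x hx => by exact_mod_cast hu_ne x hx
  unfold piconeForm
  fun_prop (disch := assumption)

theorem continuousOn_piconeRemainder :
    ContinuousOn (piconeRemainder p u ψ (Icc a b)) (Icc a b) := by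
  have hs : UniqueDiffOn ℝ (Icc a b) := uniqueDiffOn_Icc hab
  have hψ' := (hψ.derivWithin hs (m := 1) (by norm_num)).continuousOn
  have hu' := (hu.derivWithin hs (m := 1) (by norm_num)).continuousOn
  have hψc := hψ.continuousOn
  have huc := hu.continuousOn
  have hpc := hp.continuousOn
  have hu2_ne : ∀ x ∈ Icc a b, u x ^ 2 ≠ 0 := fun x hx => pow_ne_zero 2 (hu_ne x hx)
  unfold piconeRemainder
  fun_prop (disch := assumption)

theorem integral_piconeForm_eq_neg
    (hua : derivWithin u (Icc a b) a = 0) (hub : derivWithin u (Icc a b) b = 0)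
    (hψa : derivWithin ψ (Icc a b) a = 0) (hψb : derivWithin ψ (Icc a b) b = 0) :
    ∫ x in a..b, piconeForm p u ψ (Icc a b) x
      = -((∫ x in a..b, piconeRemainder p u ψ (Icc a b) x : ℝ) : ℂ) := by
  set s := Icc a b
  have hs : UniqueDiffOn ℝ s := uniqueDiffOn_Icc hab
  have hψ' : ContDiffOn ℝ 1 (derivWithin ψ s) s := hψ.derivWithin hs (by norm_num)
  have hu' : ContDiffOn ℝ 1 (derivWithin u s) s := hu.derivWithin hs (by norm_num)
  have hpψ' : ContDiffOn ℝ 1 (fun t => (p t : ℂ) * derivWithin ψ s t) s :=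
    (Complex.ofRealCLM.contDiff.comp_contDiffOn hp).mul hψ'
  have hpu' : ContDiffOn ℝ 1 (fun t => p t * derivWithin u s t) s := hp.mul hu'
  have hW : ContinuousOn (fun t => (p t : ℂ) * derivWithin ψ s t * conj (ψ t)
      - (p t * derivWithin u s t : ℝ) * (ψ t * conj (ψ t)) / u t) s := by
    have hψc := hψ.continuousOn
    have huC := Complex.continuous_ofReal.comp_continuousOn hu.continuousOn
    have hpψ'c := hpψ'.continuousOn
    have hpu'C := Complex.continuous_ofReal.comp_continuousOn hpu'.continuousOn
    have hu_neC : ∀ x ∈ s, (u x : ℂ) ≠ 0 := fun x hx => by exact_mod_cast hu_ne x hx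
    fun_prop (disch := assumption)
  have hderiv : ∀ x ∈ Ioo a b, HasDerivAt _
      (piconeForm p u ψ s x + piconeRemainder p u ψ s x) x := fun x hx =>
    have hx' : s ∈ 𝓝 x := Icc_mem_nhds hx.1 hx.2
    hasDerivAt_picone ((hψ.differentiableOn two_ne_zero).hasDerivAt_derivWithin hx')
      ((hu.differentiableOn two_ne_zero).hasDerivAt_derivWithin hx')
      ((hpψ'.differentiableOn one_ne_zero).hasDerivAt_derivWithin hx')
      ((hpu'.differentiableOn one_ne_zero).hasDerivAt_derivWithin hx')
      (hu_ne x (Ioo_subset_Icc_self hx))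
  have hformi := (continuousOn_piconeForm hab hp hu hψ hu_ne).intervalIntegrable_of_Icc
    (μ := volume) hab.le
  have hremi : IntervalIntegrable (fun x => (piconeRemainder p u ψ s x : ℂ)) volume a b :=
    (Complex.continuous_ofReal.comp_continuousOn
      (continuousOn_piconeRemainder hab hp hu hψ hu_ne)).intervalIntegrable_of_Icc hab.le
  have hftc := intervalIntegral.integral_eq_sub_of_hasDerivAt_of_le hab.le hW hderiv
    (hformi.add hremi)
  rw [intervalIntegral.integral_add hformi hremi, intervalIntegral.integral_ofReal] at hftc
  simp only [hua, hub, hψa, hψb, mul_zero, zero_mul, Complex.ofReal_zero, zero_div, sub_zero]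
    at hftc
  exact eq_neg_of_add_eq_zero_left hftc


theorem integral_piconeForm_sub_eq (μ : ℂ)
    (hua : derivWithin u (Icc a b) a = 0) (hub : derivWithin u (Icc a b) b = 0)
    (hψa : derivWithin ψ (Icc a b) a = 0) (hψb : derivWithin ψ (Icc a b) b = 0) :
    ∫ x in a..b, (piconeForm p u ψ (Icc a b) x - μ * (p x * ‖ψ x‖ ^ 2 : ℝ))
      = -(μ * (∫ x in a..b, p x * ‖ψ x‖ ^ 2 : ℝ)
        + (∫ x in a..b, piconeRemainder p u ψ (Icc a b) x : ℝ)) := by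
  have hψc := hψ.continuousOn
  have hpc := hp.continuousOn
  have hofReal := Complex.continuous_ofReal
  have hmass : IntervalIntegrable (fun x => μ * (p x * ‖ψ x‖ ^ 2 : ℝ)) volume a b :=
    ContinuousOn.intervalIntegrable_of_Icc hab.le (by fun_prop)
  have hform := (continuousOn_piconeForm hab hp hu hψ hu_ne).intervalIntegrable_of_Icc
    (μ := volume) hab.le
  rw [intervalIntegral.integral_sub hform hmass, intervalIntegral.integral_const_mul,
    intervalIntegral.integral_ofReal, integral_piconeForm_eq_neg hab hp hu hψ hu_ne hua hub hψa hψb]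
  ring

end Picone

section Model

variable {L α r τ : ℝ} {m u : ℝ → ℝ} {K : ℝ → ℝ → ℝ} {μ : ℂ} {ψ : ℝ → ℂ}

def SteadyStateEq (L α r : ℝ) (m : ℝ → ℝ) (K : ℝ → ℝ → ℝ) (u : ℝ → ℝ) : Prop :=
  ∀ x ∈ Ioo 0 L,
    derivWithin (fun t => Real.exp (α * t) * derivWithin u (Icc 0 L) t) (Icc 0 L) x
      + r * Real.exp (α * x) * u x * (m x - ∫ y in (0 : ℝ)..L, K x y * Real.exp (α * y) * u y) = 0

noncomputable def kernelIntegral (L α : ℝ) (K : ℝ → ℝ → ℝ) (ψ : ℝ → ℂ) (x : ℝ) : ℂ :=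
  ∫ y in (0 : ℝ)..L, (Complex.ofReal (K x y * Real.exp (α * y))) * ψ y

theorem piconeForm_sub_eq_of_charEq (hchar : CharEq L α r m K u μ τ ψ)
    (hsteady : SteadyStateEq L α r m K u) {x : ℝ} (hx : x ∈ Ioo 0 L) (hux : u x ≠ 0) :
    piconeForm (fun t => Real.exp (α * t)) u ψ (Icc 0 L) x
        - μ * (Real.exp (α * x) * ‖ψ x‖ ^ 2 : ℝ)
      = r * Real.exp (α * x) * u x * kernelIntegral L α K ψ x * Complex.exp (-μ * τ)
          * conj (ψ x) := by
  have hψ := hchar x hx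
  have hu : _ = (0 : ℂ) := congrArg Complex.ofReal (hsteady x hx)
  have huC : (u x : ℂ) ≠ 0 := by exact_mod_cast hux
  simp only [piconeForm, kernelIntegral]
  push_cast at hψ hu ⊢
  rw [← Complex.mul_conj']
  field_simp
  simp only [neg_mul] at hψ ⊢
  linear_combination (conj (ψ x) * u x) * hψ - (ψ x * conj (ψ x)) * hu

theorem norm_kernelIntegral_le {c x : ℝ} (hL : 0 ≤ L)
    (hK : ∀ᵐ y ∂volume.restrict (Ioc 0 L), |K x y| ≤ c)
    (hψ : IntervalIntegrable (fun y => Real.exp (α * y) * ‖ψ y‖) volume 0 L) :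
    ‖kernelIntegral L α K ψ x‖ ≤ c * ∫ y in (0 : ℝ)..L, Real.exp (α * y) * ‖ψ y‖ := by
  rw [← intervalIntegral.integral_const_mul]
  refine intervalIntegral.norm_integral_le_of_norm_le hL ?_ (hψ.const_mul c)
  rw [← ae_restrict_iff' measurableSet_Ioc]
  filter_upwards [hK] with y hy
  rw [norm_mul, Complex.norm_real, norm_mul, Real.norm_eq_abs, Real.norm_eq_abs,
    abs_of_pos (Real.exp_pos _), ← mul_assoc]
  gcongr

theorem norm_integral_piconeForm_sub_le {c Su : ℝ} (hL : 0 < L) (hr : 0 < r) (hμ : 0 ≤ μ.re)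
    (hτ : 0 ≤ τ) (hchar : CharEq L α r m K u μ τ ψ) (hsteady : SteadyStateEq L α r m K u)
    (hupos : ∀ x ∈ Icc 0 L, 0 < u x) (huSu : ∀ x ∈ Icc 0 L, u x ≤ Su)
    (hK : ∀ᵐ x ∂volume.restrict (Ioc 0 L), ∀ᵐ y ∂volume.restrict (Ioc 0 L), |K x y| ≤ c)
    (hψ : ContinuousOn ψ (Icc 0 L)) :
    ‖∫ x in (0 : ℝ)..L, (piconeForm (fun t => Real.exp (α * t)) u ψ (Icc 0 L) x
        - μ * (Real.exp (α * x) * ‖ψ x‖ ^ 2 : ℝ))‖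
      ≤ r * c * Su * (∫ x in (0 : ℝ)..L, Real.exp (α * x) * ‖ψ x‖) ^ 2 := by
  set A := ∫ x in (0 : ℝ)..L, Real.exp (α * x) * ‖ψ x‖
  have hψi : IntervalIntegrable (fun y => Real.exp (α * y) * ‖ψ y‖) volume 0 L :=
    ContinuousOn.intervalIntegrable_of_Icc hL.le (by fun_prop)
  have hdelay : ‖Complex.exp (-μ * τ)‖ ≤ 1 := by
    rw [Complex.norm_exp, Real.exp_le_one_iff]
    simpa using mul_nonneg hμ hτ
  have hIoo : ∀ᵐ x ∂volume.restrict (Ioc 0 L), x ∈ Ioo 0 L := by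
    rw [← Measure.restrict_congr_set Ioo_ae_eq_Ioc]
    exact ae_restrict_mem measurableSet_Ioo
  calc _ ≤ ∫ x in (0 : ℝ)..L, r * c * Su * A * (Real.exp (α * x) * ‖ψ x‖) := by
        refine intervalIntegral.norm_integral_le_of_norm_le hL.le ?_ (hψi.const_mul _)
        rw [← ae_restrict_iff' measurableSet_Ioc]
        filter_upwards [hK, hIoo] with x hKx hx
        have hux := hupos x (Ioo_subset_Icc_self hx)
        have hSu : 0 ≤ Su := hux.le.trans (huSu x (Ioo_subset_Icc_self hx))
        have hk := norm_kernelIntegral_le hL.le hKx hψi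
        have hcA : 0 ≤ c * A := (norm_nonneg _).trans hk
        rw [piconeForm_sub_eq_of_charEq hchar hsteady hx hux.ne']
        simp only [norm_mul, Complex.norm_real, Complex.norm_conj, Real.norm_eq_abs,
          abs_of_pos hr, abs_of_pos (Real.exp_pos _), abs_of_pos hux]
        calc _ ≤ r * Real.exp (α * x) * Su * (c * A) * 1 * ‖ψ x‖ := by
              gcongr
              exact huSu x (Ioo_subset_Icc_self hx)
          _ = _ := by ring
    _ = r * c * Su * A ^ 2 := by rw [intervalIntegral.integral_const_mul]; ring

end Model

theorem re_le_and_abs_im_le_of_mul_add_add_eq_zero {μ R : ℂ} {I N B : ℝ}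
    (h : μ * I + N + R = 0) (hI : 0 < I) (hN : 0 ≤ N) (hR : ‖R‖ ≤ B * I) :
    μ.re ≤ B ∧ |μ.im| ≤ B := by
  have hre : μ.re * I + N + R.re = 0 := by simpa using congrArg Complex.re h
  have him : μ.im * I + R.im = 0 := by simpa using congrArg Complex.im h
  constructor
  · refine le_of_mul_le_mul_right ?_ hI
    linarith [neg_le_abs R.re, Complex.abs_re_le_norm R]
  · refine le_of_mul_le_mul_right ?_ hI
    rw [← abs_of_pos hI, ← abs_mul, eq_neg_of_add_eq_zero_left him, abs_neg, abs_of_pos hI]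
    exact (Complex.abs_im_le_norm R).trans hR

theorem norm_div_ofReal_le_sqrt_two_mul {μ : ℂ} {r C : ℝ} (hr : 0 < r) (hμ : 0 ≤ μ.re)
    (hre : μ.re ≤ r * C) (him : |μ.im| ≤ r * C) : ‖μ / (r : ℂ)‖ ≤ √2 * C := by
  rw [norm_div, Complex.norm_real, Real.norm_of_nonneg hr.le, div_le_iff₀ hr, mul_assoc]
  refine (Complex.norm_le_sqrt_two_mul_max μ).trans (mul_le_mul_of_nonneg_left ?_ (by positivity))
  rw [abs_of_nonneg hμ, mul_comm]
  exact max_le hre him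

theorem eigenvalue_bound_general
    (L α r : ℝ) (hL : 0 < L) (hr : 0 < r)
    (m : ℝ → ℝ)
    (K : ℝ → ℝ → ℝ)
    (hK : MemLp (fun p : ℝ × ℝ => K p.1 p.2) ⊤
      (volume.restrict (Set.Ioo 0 L ×ˢ Set.Ioo 0 L)))
    (u : ℝ → ℝ)
    (hu : ContDiffOn ℝ 2 u (Set.Icc 0 L))
    (hupos : ∀ x ∈ Set.Icc 0 L, 0 < u x)
    (hu0 : derivWithin u (Set.Icc 0 L) 0 = 0)
    (huL : derivWithin u (Set.Icc 0 L) L = 0)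
    (husteady : ∀ x ∈ Set.Ioo 0 L,
      derivWithin (fun t => Real.exp (α * t) * derivWithin u (Set.Icc 0 L) t)
          (Set.Icc 0 L) x
        + r * Real.exp (α * x) * u x *
          (m x - ∫ y in (0:ℝ)..L, K x y * Real.exp (α * y) * u y) = 0)
    (μ : ℂ) (hμ : 0 ≤ μ.re) (τ : ℝ) (hτ : 0 ≤ τ)
    (ψ : ℝ → ℂ) (hψ : ContDiffOn ℝ 2 ψ (Set.Icc 0 L))
    (hψne : ∃ x ∈ Set.Icc 0 L, ψ x ≠ 0)
    (hψ0 : derivWithin ψ (Set.Icc 0 L) 0 = 0)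
    (hψL : derivWithin ψ (Set.Icc 0 L) L = 0)
    (hchar : CharEq L α r m K u μ τ ψ) :
    0 ≤ μ.re / r ∧
    μ.re / r ≤ Real.exp (2 * |α| * L) * L * (sSup ((fun x => |u x|) '' Set.Icc 0 L)) *
      (eLpNorm (fun p : ℝ × ℝ => K p.1 p.2) ⊤
        (volume.restrict (Set.Ioo 0 L ×ˢ Set.Ioo 0 L))).toReal ∧
    |μ.im| / r ≤ Real.exp (2 * |α| * L) * L * (sSup ((fun x => |u x|) '' Set.Icc 0 L)) *
      (eLpNorm (fun p : ℝ × ℝ => K p.1 p.2) ⊤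
        (volume.restrict (Set.Ioo 0 L ×ˢ Set.Ioo 0 L))).toReal ∧
    ‖μ / (r : ℂ)‖ ≤ Real.sqrt 2 *
      (Real.exp (2 * |α| * L) * L * (sSup ((fun x => |u x|) '' Set.Icc 0 L)) *
      (eLpNorm (fun p : ℝ × ℝ => K p.1 p.2) ⊤
        (volume.restrict (Set.Ioo 0 L ×ˢ Set.Ioo 0 L))).toReal) := by
  set c := (eLpNorm (fun p : ℝ × ℝ => K p.1 p.2) ⊤
    (volume.restrict (Ioo 0 L ×ˢ Ioo 0 L))).toReal
  set Su := sSup ((fun x => |u x|) '' Icc 0 L)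
  set C := Real.exp (2 * |α| * L) * L * Su * c
  have hune : ∀ x ∈ Icc 0 L, u x ≠ 0 := fun x hx => (hupos x hx).ne'
  have huSu : ∀ x ∈ Icc 0 L, u x ≤ Su := fun x hx =>
    isCompact_Icc.le_sSup_image_abs hu.continuousOn hx
  have hSu : 0 ≤ Su := (hupos 0 (left_mem_Icc.2 hL.le)).le.trans (huSu 0 (left_mem_Icc.2 hL.le))
  have hc : 0 ≤ c := ENNReal.toReal_nonneg
  have hexp : ContDiffOn ℝ 1 (fun t => Real.exp (α * t)) (Icc 0 L) := by fun_prop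
  have hψc := hψ.continuousOn
  have hidentity := integral_piconeForm_sub_eq hL hexp hu hψ hune μ hu0 huL hψ0 hψL
  have hN : 0 ≤ ∫ x in (0 : ℝ)..L, piconeRemainder (fun t => Real.exp (α * t)) u ψ (Icc 0 L) x :=
    intervalIntegral.integral_nonneg hL.le fun x _ => piconeRemainder_nonneg (Real.exp_pos _).le
  have hR := (norm_integral_piconeForm_sub_le hL hr hμ hτ hchar husteady hupos huSu
    (ae_ae_abs_le_toReal_eLpNorm_top_Ioo hK) hψc).trans
    (mul_le_mul_of_nonneg_left (sq_integral_exp_mul_norm_le (α := α) hL.le hψc)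
      (by positivity))
  obtain ⟨hre, him⟩ := re_le_and_abs_im_le_of_mul_add_add_eq_zero (μ := μ)
    (by linear_combination hidentity) (integral_exp_mul_norm_sq_pos hL hψc hψne) hN
    (hR.trans_eq (by ring) : _ ≤ r * C * _)
  exact ⟨div_nonneg hμ hr.le, (div_le_iff₀' hr).mpr hre, (div_le_iff₀' hr).mpr him,
    norm_div_ofReal_le_sqrt_two_mul hr hμ hre him⟩

theorem eigenvalue_bound
    (L α r : ℝ) (hL : 0 < L) (hr : 0 < r)
    (m : ℝ → ℝ) (hm : ContinuousOn m (Set.Icc 0 L))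
    (K : ℝ → ℝ → ℝ)
    (hK : MemLp (fun p : ℝ × ℝ => K p.1 p.2) ⊤
      (volume.restrict (Set.Ioo 0 L ×ˢ Set.Ioo 0 L)))
    (u : ℝ → ℝ)
    (hu : ContDiffOn ℝ 2 u (Set.Icc 0 L))
    (hupos : ∀ x ∈ Set.Icc 0 L, 0 < u x)
    (hu0 : derivWithin u (Set.Icc 0 L) 0 = 0)
    (huL : derivWithin u (Set.Icc 0 L) L = 0)
    (husteady : ∀ x ∈ Set.Ioo 0 L,
      derivWithin (fun t => Real.exp (α * t) * derivWithin u (Set.Icc 0 L) t)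
          (Set.Icc 0 L) x
        + r * Real.exp (α * x) * u x *
          (m x - ∫ y in (0:ℝ)..L, K x y * Real.exp (α * y) * u y) = 0)
    (μ : ℂ) (hμ : 0 ≤ μ.re) (τ : ℝ) (hτ : 0 ≤ τ)
    (ψ : ℝ → ℂ) (hψ : ContDiffOn ℝ 2 ψ (Set.Icc 0 L))
    (hψne : ∃ x ∈ Set.Icc 0 L, ψ x ≠ 0)
    (hψ0 : derivWithin ψ (Set.Icc 0 L) 0 = 0)
    (hψL : derivWithin ψ (Set.Icc 0 L) L = 0)
    (hchar : CharEq L α r m K u μ τ ψ) :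
    0 ≤ μ.re / r ∧
    μ.re / r ≤ Real.exp (2 * |α| * L) * L * (sSup ((fun x => |u x|) '' Set.Icc 0 L)) *
      (eLpNorm (fun p : ℝ × ℝ => K p.1 p.2) ⊤
        (volume.restrict (Set.Ioo 0 L ×ˢ Set.Ioo 0 L))).toReal ∧
    |μ.im| / r ≤ Real.exp (2 * |α| * L) * L * (sSup ((fun x => |u x|) '' Set.Icc 0 L)) *
      (eLpNorm (fun p : ℝ × ℝ => K p.1 p.2) ⊤
        (volume.restrict (Set.Ioo 0 L ×ˢ Set.Ioo 0 L))).toReal ∧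
    ‖μ / (r : ℂ)‖ ≤ Real.sqrt 2 *
      (Real.exp (2 * |α| * L) * L * (sSup ((fun x => |u x|) '' Set.Icc 0 L)) *
      (eLpNorm (fun p : ℝ × ℝ => K p.1 p.2) ⊤
        (volume.restrict (Set.Ioo 0 L ×ˢ Set.Ioo 0 L))).toReal) :=
  eigenvalue_bound_general L α r hL hr m K hK u hu hupos hu0 huL husteady μ hμ τ hτ ψ hψ hψne hψ0
    hψL hchar
end

section
/- Let α ∈ ℝ and let m : [0,∞) → ℝ be continuous. Suppose L₁ > L₂ > 0, m is not constant on [0,L₁], and for every L ∈ (0,L₁] one has m(L) = max_{x∈[0,L]} m(x). Then h₀(α,L₂) < h₀(α,L₁), where h₀(α,L) = (∫₀ᴸ m(x)e^{αx}dx)/(∫₀ᴸ e^{αx}dx). -/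
/-- The quantity `h₀(α,L)` governing the first Hopf bifurcation delay. -/
noncomputable def h0 (α : ℝ) (m : ℝ → ℝ) (L : ℝ) : ℝ :=
  (∫ x in (0:ℝ)..L, m x * Real.exp (α * x)) / (∫ x in (0:ℝ)..L, Real.exp (α * x))

theorem h0_strict_increase_of_boundary_max
    (α : ℝ) (m : ℝ → ℝ) (hm : ContinuousOn m (Set.Ici 0))
    (L₁ L₂ : ℝ) (hL₂ : 0 < L₂) (hL : L₂ < L₁)
    (hnc : ∃ x ∈ Set.Icc 0 L₁, ∃ y ∈ Set.Icc 0 L₁, m x ≠ m y)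
    (hmax : ∀ L ∈ Set.Ioc (0:ℝ) L₁, ∀ x ∈ Set.Icc 0 L, m x ≤ m L) :
    h0 α m L₂ < h0 α m L₁ := by
  have hL₁ : (0:ℝ) < L₁ := hL₂.trans hL
  set w : ℝ → ℝ := fun x => Real.exp (α * x) with hw
  set f : ℝ → ℝ := fun x => m x * w x with hf
  have hwc : Continuous w := by continuity
  have hwpos : ∀ x, 0 < w x := fun x => Real.exp_pos _
  -- continuity of f on relevant intervals
  have hfc : ∀ a b : ℝ, 0 ≤ a → ContinuousOn f (Set.Icc a b) := by
    intro a b ha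
    exact (hm.mono (fun x hx => le_trans ha hx.1)).mul hwc.continuousOn
  -- monotonicity of m on [0, L₁]
  have hmono : ∀ x ∈ Set.Icc (0:ℝ) L₁, ∀ y ∈ Set.Icc (0:ℝ) L₁, x ≤ y → m x ≤ m y := by
    intro x hx y hy hxy
    rcases eq_or_lt_of_le hxy with rfl | hlt
    · exact le_rfl
    · exact hmax y ⟨lt_of_le_of_lt hx.1 hlt, hy.2⟩ x ⟨hx.1, hlt.le⟩
  -- m 0 < m L₁
  have h01 : m 0 < m L₁ := by
    obtain ⟨x, hx, y, hy, hxy⟩ := hnc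
    rcases lt_trichotomy (m x) (m y) with h | h | h
    · exact lt_of_le_of_lt (hmono 0 ⟨le_rfl, hL₁.le⟩ x hx hx.1)
        (lt_of_lt_of_le h (hmono y hy L₁ ⟨hL₁.le, le_rfl⟩ hy.2))
    · exact absurd h hxy
    · exact lt_of_le_of_lt (hmono 0 ⟨le_rfl, hL₁.le⟩ y hy hy.1)
        (lt_of_lt_of_le h (hmono x hx L₁ ⟨hL₁.le, le_rfl⟩ hx.2))
  -- integrability
  have hiw : ∀ a b : ℝ, IntervalIntegrable w MeasureTheory.volume a b :=
    fun a b => hwc.intervalIntegrable a b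
  have hif : ∀ a b : ℝ, 0 ≤ a → a ≤ b → IntervalIntegrable f MeasureTheory.volume a b := by
    intro a b ha hab
    exact (hfc a b ha).intervalIntegrable_of_Icc hab
  set A₂ := ∫ x in (0:ℝ)..L₂, f x with hA2
  set B₂ := ∫ x in (0:ℝ)..L₂, w x with hB2
  set I := ∫ x in L₂..L₁, f x with hI
  set J := ∫ x in L₂..L₁, w x with hJ
  have hB2pos : 0 < B₂ :=
    intervalIntegral.integral_pos hL₂ hwc.continuousOn
      (fun x _ => (hwpos x).le) ⟨0, Set.left_mem_Icc.2 hL₂.le, hwpos 0⟩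
  have hJpos : 0 < J :=
    intervalIntegral.integral_pos hL hwc.continuousOn
      (fun x _ => (hwpos x).le) ⟨L₂, Set.left_mem_Icc.2 hL.le, hwpos L₂⟩
  have hsplitw : (∫ x in (0:ℝ)..L₁, w x) = B₂ + J :=
    (intervalIntegral.integral_add_adjacent_intervals (hiw 0 L₂) (hiw L₂ L₁)).symm
  have hsplitf : (∫ x in (0:ℝ)..L₁, f x) = A₂ + I :=
    (intervalIntegral.integral_add_adjacent_intervals
      (hif 0 L₂ le_rfl hL₂.le) (hif L₂ L₁ hL₂.le hL.le)).symm
  -- constant comparison value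
  have hcB : (∫ x in (0:ℝ)..L₂, m L₂ * w x) = m L₂ * B₂ := by
    rw [intervalIntegral.integral_const_mul]
  have hcJ : (∫ x in L₂..L₁, m L₂ * w x) = m L₂ * J := by
    rw [intervalIntegral.integral_const_mul]
  -- weak inequalities
  have hA2le : A₂ ≤ m L₂ * B₂ := by
    rw [← hcB]
    refine intervalIntegral.integral_mono_on hL₂.le (hif 0 L₂ le_rfl hL₂.le)
      ((hiw 0 L₂).const_mul _) (fun x hx => ?_)
    exact mul_le_mul_of_nonneg_right
      (hmax L₂ ⟨hL₂, hL.le⟩ x hx) (hwpos x).le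
  have hIge : m L₂ * J ≤ I := by
    rw [← hcJ]
    refine intervalIntegral.integral_mono_on hL.le ((hiw L₂ L₁).const_mul _)
      (hif L₂ L₁ hL₂.le hL.le) (fun x hx => ?_)
    exact mul_le_mul_of_nonneg_right
      (hmono L₂ ⟨hL₂.le, hL.le⟩ x ⟨hL₂.le.trans hx.1, hx.2⟩ hx.1) (hwpos x).le
  -- strictness in one of the two
  have hkey : A₂ * J < I * B₂ := by
    rcases lt_or_ge (m L₂) (m L₁) with hcase | hcase
    · -- I > m L₂ * J strictly
      have hIstrict : m L₂ * J < I := by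
        rw [← hcJ]
        refine intervalIntegral.integral_lt_integral_of_continuousOn_of_le_of_exists_lt hL
          (continuousOn_const.mul hwc.continuousOn) (hfc L₂ L₁ hL₂.le) (fun x hx => ?_)
          ⟨L₁, Set.right_mem_Icc.2 hL.le, ?_⟩
        · exact mul_le_mul_of_nonneg_right
            (hmono L₂ ⟨hL₂.le, hL.le⟩ x ⟨hL₂.le.trans hx.1.le, hx.2⟩ hx.1.le) (hwpos x).le
        · exact mul_lt_mul_of_pos_right hcase (hwpos L₁)
      calc A₂ * J ≤ m L₂ * B₂ * J := mul_le_mul_of_nonneg_right hA2le hJpos.le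
        _ = m L₂ * J * B₂ := by ring
        _ < I * B₂ := mul_lt_mul_of_pos_right hIstrict hB2pos
    · -- m L₂ = m L₁, so m 0 < m L₂, A₂ < m L₂ * B₂ strictly
      have h0L2 : m 0 < m L₂ := by
        have := hmono L₂ ⟨hL₂.le, hL.le⟩ L₁ ⟨hL₁.le, le_rfl⟩ hL.le
        linarith
      have hA2strict : A₂ < m L₂ * B₂ := by
        rw [← hcB]
        refine intervalIntegral.integral_lt_integral_of_continuousOn_of_le_of_exists_lt hL₂
          (hfc 0 L₂ le_rfl) (continuousOn_const.mul hwc.continuousOn) (fun x hx => ?_)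
          ⟨0, Set.left_mem_Icc.2 hL₂.le, ?_⟩
        · exact mul_le_mul_of_nonneg_right
            (hmax L₂ ⟨hL₂, hL.le⟩ x ⟨hx.1.le, hx.2⟩) (hwpos x).le
        · exact mul_lt_mul_of_pos_right h0L2 (hwpos 0)
      calc A₂ * J < m L₂ * B₂ * J := mul_lt_mul_of_pos_right hA2strict hJpos
        _ = m L₂ * J * B₂ := by ring
        _ ≤ I * B₂ := mul_le_mul_of_nonneg_right hIge hB2pos.le
  -- conclude
  have hB1pos : 0 < B₂ + J := by linarith
  unfold h0
  rw [hsplitw, hsplitf]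
  rw [div_lt_div_iff₀ hB2pos hB1pos]
  nlinarith [hkey]
end

section
/- The function g : (π, ∞) → ℝ defined by g(s) = π s (e^s + 1)/((π² + s²)(e^s − 1)) is strictly decreasing: for all s₁, s₂ with π < s₁ < s₂ one has g(s₂) < g(s₁). -/
/-!
Up to the constant factor π, the function is the product of `s / (π² + s²)` and
`(eˢ + 1) / (eˢ - 1) = coth (s / 2)`. Both factors are positive on `(π, ∞)`; the second is strictly
decreasing on `(0, ∞)`, and the first is strictly decreasing beyond `π` because
`t / (π² + t²) < s / (π² + s²)` reduces to `(t - s) (s t - π²) > 0`.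
-/

open Real Set

theorem AntitoneOn.mul_strictAntiOn {α β : Type*} [Preorder α] [Mul β] [Zero β] [Preorder β]
    [PosMulStrictMono β] [MulPosMono β] {f g : α → β} {s : Set α} (hf : AntitoneOn f s)
    (hg : StrictAntiOn g s) (hf₀ : ∀ x ∈ s, 0 < f x) (hg₀ : ∀ x ∈ s, 0 ≤ g x) :
    StrictAntiOn (fun x => f x * g x) s := fun _ hx _ hy hxy =>
  mul_lt_mul_of_le_of_lt_of_pos_of_nonneg (hf hx hy hxy.le) (hg hx hy hxy) (hf₀ _ hy) (hg₀ _ hx)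

theorem strictAntiOn_div_sq_add_sq {c : ℝ} (hc : 0 < c) :
    StrictAntiOn (fun s => s / (c ^ 2 + s ^ 2)) (Ici c) := by
  intro s (hs : c ≤ s) t (ht : c ≤ t) hst
  have hcst : c ^ 2 < s * t := by nlinarith
  rw [div_lt_div_iff₀ (by positivity) (by positivity)]
  nlinarith [mul_pos (sub_pos.mpr hcst) (sub_pos.mpr hst)]

theorem strictAntiOn_exp_add_one_div_exp_sub_one :
    StrictAntiOn (fun s => (exp s + 1) / (exp s - 1)) (Ioi 0) := by
  intro s (hs : 0 < s) t (ht : 0 < t) hst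
  have hes : 1 < exp s := one_lt_exp_iff.mpr hs
  have hest : exp s < exp t := exp_lt_exp.mpr hst
  rw [div_lt_div_iff₀ (by linarith) (by linarith)]
  nlinarith

theorem g_strictAnti_beyond_pi :
    ∀ s₁ s₂ : ℝ, π < s₁ → s₁ < s₂ →
      π * s₂ * (Real.exp s₂ + 1) / ((π ^ 2 + s₂ ^ 2) * (Real.exp s₂ - 1)) <
      π * s₁ * (Real.exp s₁ + 1) / ((π ^ 2 + s₁ ^ 2) * (Real.exp s₁ - 1)) := by
  intro s₁ s₂ h₁ h₂
  have hfactor (s : ℝ) : π * s * (exp s + 1) / ((π ^ 2 + s ^ 2) * (exp s - 1)) =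
      π * (s / (π ^ 2 + s ^ 2) * ((exp s + 1) / (exp s - 1))) := by
    rw [mul_div_mul_comm, mul_div_assoc, mul_assoc]
  have hIci : Ici π ⊆ Ioi 0 := Ici_subset_Ioi.mpr pi_pos
  have hprod : StrictAntiOn (fun s => s / (π ^ 2 + s ^ 2) * ((exp s + 1) / (exp s - 1))) (Ici π) :=
    (strictAntiOn_div_sq_add_sq pi_pos).antitoneOn.mul_strictAntiOn
      (strictAntiOn_exp_add_one_div_exp_sub_one.mono hIci)
      (fun s hs => by have : 0 < s := hIci hs; positivity)
      (fun s hs => by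
        have : 1 < exp s := one_lt_exp_iff.mpr (hIci hs)
        exact div_nonneg (by linarith) (by linarith))
  rw [hfactor, hfactor]
  exact mul_lt_mul_of_pos_left (hprod h₁.le (h₁.trans h₂).le h₂) pi_pos
end

section
/- Let L > 0, α ∈ ℝ, let q : [0,L] → ℝ be continuous, and let u ∈ C²([0,L]) satisfy u(x) > 0 on [0,L], u'(0) = u'(L) = 0, and (e^{αx} u'(x))' + q(x) e^{αx} u(x) = 0 for all x ∈ [0,L]. Then for every ψ ∈ C¹([0,L],ℂ): ∫₀ᴸ e^{αx} |ψ'(x)|² dx ≥ ∫₀ᴸ q(x) e^{αx} |ψ(x)|² dx. -/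
/-! Ground-state substitution (Picone's identity): with `r = u' / u` and `g = p u' ‖ψ‖² / u`, the
equation `(p u')' = -q p u` gives `g' = p ‖ψ'‖² - q p ‖ψ‖² - p ‖ψ' - r ψ‖²`. Hence
`g' ≤ p ‖ψ'‖² - q p ‖ψ‖²`, and integrating, the boundary terms `g` vanish by the no-flux
condition `p u' = 0` at the end points. -/

open Set MeasureTheory
open scoped RealInnerProductSpace

variable {E : Type*} [NormedAddCommGroup E] [InnerProductSpace ℝ E]

theorem two_mul_mul_inner_sub_sq_mul_norm_sq_le (r : ℝ) (z z' : E) :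
    2 * r * ⟪z, z'⟫ - r ^ 2 * ‖z‖ ^ 2 ≤ ‖z'‖ ^ 2 := by
  have h := norm_sub_sq_real z' (r • z)
  rw [norm_smul, inner_smul_right, real_inner_comm, Real.norm_eq_abs, mul_pow, sq_abs] at h
  nlinarith [sq_nonneg ‖z' - r • z‖]

theorem integral_potential_le_integral_energy_of_pos_solution {a b : ℝ} (hab : a ≤ b)
    {p q u u' : ℝ → ℝ} {ψ ψ' : ℝ → E}
    (hp : ∀ x ∈ Ioo a b, 0 ≤ p x) (hupos : ∀ x ∈ Icc a b, 0 < u x)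
    (hu : ∀ x ∈ Icc a b, HasDerivWithinAt u (u' x) (Icc a b) x)
    (hflux : ∀ x ∈ Icc a b,
      HasDerivWithinAt (fun t => p t * u' t) (-(q x * p x * u x)) (Icc a b) x)
    (hfluxa : p a * u' a = 0) (hfluxb : p b * u' b = 0)
    (hψ : ∀ x ∈ Icc a b, HasDerivWithinAt ψ (ψ' x) (Icc a b) x)
    (hpot : IntegrableOn (fun x => q x * p x * ‖ψ x‖ ^ 2) (Icc a b))
    (hkin : IntegrableOn (fun x => p x * ‖ψ' x‖ ^ 2) (Icc a b)) :
    ∫ x in a..b, q x * p x * ‖ψ x‖ ^ 2 ≤ ∫ x in a..b, p x * ‖ψ' x‖ ^ 2 := by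
  set g : ℝ → ℝ := fun t => p t * u' t * (‖ψ t‖ ^ 2 / u t)
  have hg : ∀ x ∈ Icc a b, HasDerivWithinAt g
      (-(q x * p x * u x) * (‖ψ x‖ ^ 2 / u x) + p x * u' x *
        ((2 * ⟪ψ x, ψ' x⟫ * u x - ‖ψ x‖ ^ 2 * u' x) / u x ^ 2)) (Icc a b) x := fun x hx =>
    (hflux x hx).mul ((hψ x hx).norm_sq.div (hu x hx) (hupos x hx).ne')
  have hg_le : ∀ x ∈ Ioo a b, -(q x * p x * u x) * (‖ψ x‖ ^ 2 / u x) + p x * u' x *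
      ((2 * ⟪ψ x, ψ' x⟫ * u x - ‖ψ x‖ ^ 2 * u' x) / u x ^ 2) ≤
      p x * ‖ψ' x‖ ^ 2 - q x * p x * ‖ψ x‖ ^ 2 := by
    intro x hx
    have hux := (hupos x (Ioo_subset_Icc_self hx)).ne'
    have key := mul_le_mul_of_nonneg_left
      (two_mul_mul_inner_sub_sq_mul_norm_sq_le (u' x / u x) (ψ x) (ψ' x)) (hp x hx)
    have hexpand : -(q x * p x * u x) * (‖ψ x‖ ^ 2 / u x) + p x * u' x *
        ((2 * ⟪ψ x, ψ' x⟫ * u x - ‖ψ x‖ ^ 2 * u' x) / u x ^ 2) =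
        p x * (2 * (u' x / u x) * ⟪ψ x, ψ' x⟫ - (u' x / u x) ^ 2 * ‖ψ x‖ ^ 2) -
          q x * p x * ‖ψ x‖ ^ 2 := by
      field_simp
      ring
    linarith
  have hg_cont : ContinuousOn g (Icc a b) := fun x hx => (hg x hx).continuousWithinAt
  have hφ : IntegrableOn (fun x => p x * ‖ψ' x‖ ^ 2 - q x * p x * ‖ψ x‖ ^ 2) (Icc a b) :=
    hkin.sub hpot
  have hmain := intervalIntegral.sub_le_integral_of_hasDeriv_right_of_le hab hg_cont
    (fun x hx => ((hg x (Ioo_subset_Icc_self hx)).hasDerivAt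
      (Icc_mem_nhds hx.1 hx.2)).hasDerivWithinAt) hφ hg_le
  have hgb : g b = 0 := by simp only [g, hfluxb, zero_mul]
  have hga : g a = 0 := by simp only [g, hfluxa, zero_mul]
  rw [hgb, hga, sub_zero, intervalIntegral.integral_sub
    ((intervalIntegrable_iff_integrableOn_Icc_of_le hab).2 hkin)
    ((intervalIntegrable_iff_integrableOn_Icc_of_le hab).2 hpot)] at hmain
  linarith

theorem quadratic_form_nonpos_of_positive_ground_state
    (L α : ℝ) (hL : 0 < L)
    (q : ℝ → ℝ) (hq : ContinuousOn q (Set.Icc 0 L))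
    (u : ℝ → ℝ) (hu : ContDiffOn ℝ 2 u (Set.Icc 0 L))
    (hupos : ∀ x ∈ Set.Icc 0 L, 0 < u x)
    (hu0 : derivWithin u (Set.Icc 0 L) 0 = 0)
    (huL : derivWithin u (Set.Icc 0 L) L = 0)
    (hueq : ∀ x ∈ Set.Icc 0 L,
      derivWithin (fun t => Real.exp (α * t) * derivWithin u (Set.Icc 0 L) t)
          (Set.Icc 0 L) x
        + q x * Real.exp (α * x) * u x = 0) :
    ∀ ψ : ℝ → ℂ, ContDiffOn ℝ 1 ψ (Set.Icc 0 L) →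
      (∫ x in (0:ℝ)..L, q x * Real.exp (α * x) * ‖ψ x‖ ^ 2) ≤
        ∫ x in (0:ℝ)..L, Real.exp (α * x) * ‖derivWithin ψ (Set.Icc 0 L) x‖ ^ 2 := by
  intro ψ hψ
  have hD : UniqueDiffOn ℝ (Icc 0 L) := uniqueDiffOn_Icc hL
  have hψc : ContinuousOn ψ (Icc 0 L) := hψ.continuousOn
  have hψ' : ContinuousOn (derivWithin ψ (Icc 0 L)) (Icc 0 L) :=
    hψ.continuousOn_derivWithin hD le_rfl
  have hu' : DifferentiableOn ℝ (derivWithin u (Icc 0 L)) (Icc 0 L) :=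
    (hu.derivWithin hD le_rfl).differentiableOn one_ne_zero
  have hflux : DifferentiableOn ℝ
      (fun t => Real.exp (α * t) * derivWithin u (Icc 0 L) t) (Icc 0 L) := by
    fun_prop
  refine integral_potential_le_integral_energy_of_pos_solution hL.le
    (fun x _ => (Real.exp_pos _).le) hupos
    (fun x hx => (hu.differentiableOn two_ne_zero x hx).hasDerivWithinAt)
    (fun x hx => eq_neg_of_add_eq_zero_left (hueq x hx) ▸ (hflux x hx).hasDerivWithinAt)
    (by rw [hu0, mul_zero]) (by rw [huL, mul_zero])
    (fun x hx => (hψ.differentiableOn one_ne_zero x hx).hasDerivWithinAt)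
    (ContinuousOn.integrableOn_Icc (by fun_prop)) (ContinuousOn.integrableOn_Icc (by fun_prop))
end
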